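/- There is a constant c such that for every sequential regex formula γ that is synchronized for a set X ⊆ Vars, there exists a sequential vset-automaton A that is synchronized for X, satisfies ⟦A⟧(d) = ⟦γ⟧(d) for every document d, and has at most c·|γ| states and at most c·|γ| transitions, where |γ| is the length of γ. -/

import Mathlib

/-!
Thompson's construction. Every subformula of `γ` gets a fragment on its own block of
`2 * size` states, with an entry and an exit state, and the fragments are glued by
`ε`-transitions, except that `x{α}` is glued by `x⊢` and `⊣x`; this gives at most `2|γ|` states
and `4|γ|` transitions. The label sequences of the accepting runs are exactly the traces of `γ`,
defined by recursion on `γ`. As `γ` is sequential, a trace opens and later closes each variable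
at most once, so every accepting run is valid, and reading off the mapping of a trace commutes
with the clauses of the regex semantics, which gives `⟦A⟧ = ⟦γ⟧`. If `γ` is synchronized for
`x`, the only transitions on `x` are the two of the single binder `x{·}`, which lies under no
disjunction and no star, so every trace passes through them as soon as `x ∈ Vars(γ)`.
-/

namespace Spanners

open scoped Classical

/-! ### Spans and mappings -/

abbrev Span := ℕ × ℕ

abbrev VMapping := ℕ → Option Span

def emptyMapping : VMapping := fun _ => none

def mapDom (μ : VMapping) : Set ℕ := {x | μ x ≠ none}

/-- Two mappings are compatible if they agree on every common variable. -/
def Compatible (μ1 μ2 : VMapping) : Prop :=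
  ∀ x s1 s2, μ1 x = some s1 → μ2 x = some s2 → s1 = s2

def DisjointDom (μ1 μ2 : VMapping) : Prop :=
  ∀ x, μ1 x = none ∨ μ2 x = none

def munion (μ1 μ2 : VMapping) : VMapping := fun x =>
  match μ1 x with
  | some s => some s
  | none => μ2 x

def minsert (x : ℕ) (s : Span) (μ : VMapping) : VMapping :=
  fun y => if y = x then some s else μ y

/-- Natural join of two sets of mappings. -/
def joinSet (S1 S2 : Set VMapping) : Set VMapping :=
  {μ | ∃ μ1 ∈ S1, ∃ μ2 ∈ S2, Compatible μ1 μ2 ∧ μ = munion μ1 μ2}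

/-- Difference of two sets of mappings. -/
def diffSet (S1 S2 : Set VMapping) : Set VMapping :=
  {μ1 | μ1 ∈ S1 ∧ ∀ μ2 ∈ S2, ¬ Compatible μ1 μ2}

/-- Restriction of a mapping to a set of variables. -/
noncomputable def restrictMap (μ : VMapping) (V : Set ℕ) : VMapping :=
  fun x => if x ∈ V then μ x else none

/-- Projection of a set of mappings to a set of variables. -/
def projSet (V : Set ℕ) (S : Set VMapping) : Set VMapping :=
  {μ' | ∃ μ ∈ S, μ' = restrictMap μ V}

/-! ### Regex formulas -/

inductive RGX (Sig : Type) where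
  | empty : RGX Sig
  | eps : RGX Sig
  | letter : Sig → RGX Sig
  | union : RGX Sig → RGX Sig → RGX Sig
  | concat : RGX Sig → RGX Sig → RGX Sig
  | star : RGX Sig → RGX Sig
  | bind : ℕ → RGX Sig → RGX Sig

variable {Sig : Type}

def RGX.vars : RGX Sig → Finset ℕ
  | .empty => ∅
  | .eps => ∅
  | .letter _ => ∅
  | .union a b => a.vars ∪ b.vars
  | .concat a b => a.vars ∪ b.vars
  | .star a => a.vars
  | .bind x a => insert x a.vars

def RGX.size : RGX Sig → ℕ
  | .empty => 1
  | .eps => 1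
  | .letter _ => 1
  | .union a b => a.size + b.size + 1
  | .concat a b => a.size + b.size + 1
  | .star a => a.size + 1
  | .bind _ a => a.size + 1

/-- The schemaless semantics `⟨α⟩(d)`: `RMatch α d i j μ` means `([i,j⟩, μ) ∈ ⟨α⟩(d)`. -/
inductive RMatch : RGX Sig → List Sig → ℕ → ℕ → VMapping → Prop where
  | eps {d : List Sig} {i : ℕ} (h1 : 1 ≤ i) (h2 : i ≤ d.length + 1) :
      RMatch .eps d i i emptyMapping
  | letter {d : List Sig} {i : ℕ} {σ : Sig} (h1 : 1 ≤ i) (h2 : d[i - 1]? = some σ) :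
      RMatch (.letter σ) d i (i + 1) emptyMapping
  | unionL {a b : RGX Sig} {d : List Sig} {i j : ℕ} {μ : VMapping}
      (h : RMatch a d i j μ) : RMatch (.union a b) d i j μ
  | unionR {a b : RGX Sig} {d : List Sig} {i j : ℕ} {μ : VMapping}
      (h : RMatch b d i j μ) : RMatch (.union a b) d i j μ
  | concat {a b : RGX Sig} {d : List Sig} {i k j : ℕ} {μ1 μ2 : VMapping}
      (h1 : RMatch a d i k μ1) (h2 : RMatch b d k j μ2) (hd : DisjointDom μ1 μ2) :
      RMatch (.concat a b) d i j (munion μ1 μ2)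
  | bind {x : ℕ} {a : RGX Sig} {d : List Sig} {i j : ℕ} {μ : VMapping}
      (h : RMatch a d i j μ) (hx : μ x = none) :
      RMatch (.bind x a) d i j (minsert x (i, j) μ)
  | starNil {a : RGX Sig} {d : List Sig} {i : ℕ} (h1 : 1 ≤ i) (h2 : i ≤ d.length + 1) :
      RMatch (.star a) d i i emptyMapping
  | starCons {a : RGX Sig} {d : List Sig} {i k j : ℕ} {μ1 μ2 : VMapping}
      (h1 : RMatch a d i k μ1) (h2 : RMatch (.star a) d k j μ2) (hd : DisjointDom μ1 μ2) :
      RMatch (.star a) d i j (munion μ1 μ2)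

/-- `⟦α⟧(d)`: mappings extracted with the full span. -/
def rgxSem (α : RGX Sig) (d : List Sig) : Set VMapping :=
  {μ | RMatch α d 1 (d.length + 1) μ}

/-- Sequential regex formulas. -/
def RGX.Sequential : RGX Sig → Prop
  | .empty => True
  | .eps => True
  | .letter _ => True
  | .union a b => a.Sequential ∧ b.Sequential
  | .concat a b => a.Sequential ∧ b.Sequential ∧ Disjoint a.vars b.vars
  | .star a => a.Sequential ∧ a.vars = ∅
  | .bind x a => a.Sequential ∧ x ∉ a.vars

/-- Variable-free words over the alphabet (built from ε, letters and concatenation). -/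
inductive RGX.IsWord : RGX Sig → Prop where
  | eps : RGX.IsWord .eps
  | letter (σ : Sig) : RGX.IsWord (.letter σ)
  | concat {a b : RGX Sig} : a.IsWord → b.IsWord → RGX.IsWord (.concat a b)

/-- Functional for a set `V` of variables. -/
inductive FunctionalFor : RGX Sig → Finset ℕ → Prop where
  | word {α : RGX Sig} (h : α.IsWord) : FunctionalFor α ∅
  | union {a b : RGX Sig} {V : Finset ℕ} (ha : FunctionalFor a V) (hb : FunctionalFor b V) :
      FunctionalFor (.union a b) V
  | concat {a b : RGX Sig} {V : Finset ℕ} (V1 : Finset ℕ) (hsub : V1 ⊆ V)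
      (ha : FunctionalFor a V1) (hb : FunctionalFor b (V \ V1)) :
      FunctionalFor (.concat a b) V
  | star {a : RGX Sig} (h : FunctionalFor a ∅) : FunctionalFor (.star a) ∅
  | bind {x : ℕ} {a : RGX Sig} {V : Finset ℕ} (h : FunctionalFor a (V.erase x)) :
      FunctionalFor (.bind x a) V

def RGX.Functional (α : RGX Sig) : Prop := FunctionalFor α α.vars

/-- Disjunctive functional regex formulas: finite disjunctions of functional regex formulas. -/
inductive DisjFunctional : RGX Sig → Prop where
  | base {γ : RGX Sig} (h : γ.Functional) : DisjFunctional γ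
  | union {a b : RGX Sig} (ha : DisjFunctional a) (hb : DisjFunctional b) :
      DisjFunctional (.union a b)

/-- Number of disjuncts of a (disjunctive) regex formula. -/
def countDisjuncts : RGX Sig → ℕ
  | .union a b => countDisjuncts a + countDisjuncts b
  | _ => 1

/-- Disjunction-free regex formulas. -/
def RGX.DisjFree : RGX Sig → Prop
  | .union _ _ => False
  | .concat a b => a.DisjFree ∧ b.DisjFree
  | .star a => a.DisjFree
  | .bind _ a => a.DisjFree
  | _ => True

/-- `γ` is synchronized for `x`: no subformula `γ1 ∨ γ2` contains `x`. -/
def RGX.SyncFor : RGX Sig → ℕ → Prop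
  | .union a b, x => (x ∉ a.vars ∧ x ∉ b.vars) ∧ a.SyncFor x ∧ b.SyncFor x
  | .concat a b, x => a.SyncFor x ∧ b.SyncFor x
  | .star a, x => a.SyncFor x
  | .bind _ a, x => a.SyncFor x
  | _, _ => True

/-- Concatenation of a list of regex formulas. -/
def concatList : List (RGX Sig) → RGX Sig
  | [] => .eps
  | [α] => α
  | α :: rest => .concat α (concatList rest)

/-- Disjunction of a list of regex formulas. -/
def disjList : List (RGX Sig) → RGX Sig
  | [] => .empty
  | [α] => α
  | α :: rest => .union α (disjList rest)

/-! ### vset-automata -/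

inductive VLabel (Sig : Type) where
  | eps : VLabel Sig
  | letter : Sig → VLabel Sig
  | openv : ℕ → VLabel Sig
  | closev : ℕ → VLabel Sig
deriving DecidableEq

structure VA (Sig : Type) [DecidableEq Sig] where
  q0 : ℕ
  F : Finset ℕ
  δ : Finset (ℕ × VLabel Sig × ℕ)

variable [DecidableEq Sig]

/-- The states of a VA: the initial state and all states mentioned in `F` or in transitions. -/
def statesOf (A : VA Sig) : Finset ℕ :=
  insert A.q0 (A.F ∪ A.δ.image (fun t => t.1) ∪ A.δ.image (fun t => t.2.2))

def labelVars : VLabel Sig → Finset ℕ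
  | .openv x => {x}
  | .closev x => {x}
  | _ => ∅

/-- `Vars(A)`: the variables mentioned in the transitions of `A`. -/
def varsOf (A : VA Sig) : Finset ℕ := A.δ.biUnion (fun t => labelVars t.2.1)

/-- Total size of a VA: number of states plus number of transitions. -/
def vaSize (A : VA Sig) : ℕ := (statesOf A).card + A.δ.card

/-- `A.PathFrom p ls q`: a path (run segment) from `p` to `q` with label sequence `ls`. -/
inductive VA.PathFrom (A : VA Sig) : ℕ → List (VLabel Sig) → ℕ → Prop where
  | nil (q : ℕ) : VA.PathFrom A q [] q
  | cons {p q r : ℕ} {l : VLabel Sig} {ls : List (VLabel Sig)}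
      (h : (p, l, q) ∈ A.δ) (htail : VA.PathFrom A q ls r) : VA.PathFrom A p (l :: ls) r

/-- The word (document) read by a sequence of labels. -/
def readWord : List (VLabel Sig) → List Sig :=
  List.filterMap fun l => match l with
    | VLabel.letter σ => some σ
    | _ => none

def isLetterL : VLabel Sig → Bool
  | .letter _ => true
  | _ => false

/-- The current position in the document just before executing the `k`-th label. -/
def posAt (ls : List (VLabel Sig)) (k : ℕ) : ℕ := 1 + (ls.take k).countP isLetterL

/-- Validity of a run, given by its label sequence. -/
def ValidLabels (ls : List (VLabel Sig)) : Prop :=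
  ∀ x : ℕ,
    ls.count (VLabel.openv x) ≤ 1 ∧
    ls.count (VLabel.closev x) ≤ 1 ∧
    ((VLabel.openv x) ∈ ls ↔ (VLabel.closev x) ∈ ls) ∧
    ∀ i j : ℕ, ls[i]? = some (VLabel.openv x) → ls[j]? = some (VLabel.closev x) →
      posAt ls i ≤ posAt ls j

/-- The mapping `μ_ρ` extracted from a (valid accepting) run with label sequence `ls`. -/
def runMapping (ls : List (VLabel Sig)) : VMapping := fun x =>
  if (VLabel.openv x) ∈ ls then
    some (posAt ls (ls.idxOf (VLabel.openv x)), posAt ls (ls.idxOf (VLabel.closev x)))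
  else none

/-- `ls` is the label sequence of an accepting run of `A`. -/
def AcceptsWith (A : VA Sig) (ls : List (VLabel Sig)) : Prop :=
  ∃ qf, VA.PathFrom A A.q0 ls qf ∧ qf ∈ A.F

/-- `⟦A⟧(d)`. -/
def vaSem (A : VA Sig) (d : List Sig) : Set VMapping :=
  {μ | ∃ ls, AcceptsWith A ls ∧ readWord ls = d ∧ ValidLabels ls ∧ μ = runMapping ls}

/-- A VA is sequential if all of its accepting runs are valid. -/
def VA.Sequential (A : VA Sig) : Prop := ∀ ls, AcceptsWith A ls → ValidLabels ls

/-- A run from the initial state to `q` that is a prefix of an accepting run. -/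
def PrefixRun (A : VA Sig) (ls : List (VLabel Sig)) (q : ℕ) : Prop :=
  VA.PathFrom A A.q0 ls q ∧ ∃ ls' qf, VA.PathFrom A q ls' qf ∧ qf ∈ A.F

/-- `A` is semi-functional for the variable `x`: no state has extended configuration `d`. -/
def SemiFunctionalFor (A : VA Sig) (x : ℕ) : Prop :=
  ¬ ∃ q ls1 ls2, PrefixRun A ls1 q ∧ PrefixRun A ls2 q ∧
      (VLabel.closev x) ∈ ls1 ∧ (VLabel.openv x) ∉ ls2

def SemiFunctionalForSet (A : VA Sig) (X : Finset ℕ) : Prop :=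
  ∀ x ∈ X, SemiFunctionalFor A x

/-- Functional VA: sequential, and every accepting run opens and closes every variable. -/
def FunctionalVA (A : VA Sig) : Prop :=
  A.Sequential ∧ ∀ ls, AcceptsWith A ls → ∀ x ∈ varsOf A,
    (VLabel.openv x) ∈ ls ∧ (VLabel.closev x) ∈ ls

/-- `l` has a unique target state in `A`. -/
def UniqueTarget (A : VA Sig) (l : VLabel Sig) : Prop :=
  ∃ qt : ℕ, ∀ p q : ℕ, (p, l, q) ∈ A.δ → q = qt

/-- `A` is synchronized for the variable `x`. -/
def SyncForVA (A : VA Sig) (x : ℕ) : Prop :=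
  UniqueTarget A (VLabel.openv x) ∧ UniqueTarget A (VLabel.closev x) ∧
    ((∀ ls, AcceptsWith A ls → (VLabel.openv x) ∈ ls ∧ (VLabel.closev x) ∈ ls) ∨
     (∀ ls, AcceptsWith A ls → (VLabel.openv x) ∉ ls ∧ (VLabel.closev x) ∉ ls))

/-- `A` is the disjunctive functional VA with functional components `parts`. -/
def DisjFunctionalVAWith (A : VA Sig) (parts : List (VA Sig)) : Prop :=
  (∀ B ∈ parts, FunctionalVA B) ∧
  (parts.Pairwise fun B C => Disjoint (statesOf B) (statesOf C)) ∧
  (∀ B ∈ parts, A.q0 ∉ statesOf B) ∧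
  A.F = parts.foldr (fun B s => B.F ∪ s) (∅ : Finset ℕ) ∧
  A.δ = (parts.map (fun B => (A.q0, (VLabel.eps : VLabel Sig), B.q0))).toFinset
        ∪ parts.foldr (fun B s => B.δ ∪ s) (∅ : Finset (ℕ × VLabel Sig × ℕ))

def DisjFunctionalVA (A : VA Sig) : Prop := ∃ parts, DisjFunctionalVAWith A parts

/-! ### 3CNF formulas -/

/-- A 3CNF clause over `n` Boolean variables: a triple of literals; `(i, true)` is `xᵢ`,
`(i, false)` is `¬xᵢ`. -/
def Clause3 (n : ℕ) : Type := (Fin n × Bool) × (Fin n × Bool) × (Fin n × Bool)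

def litsOf {n : ℕ} (c : Clause3 n) : List (Fin n × Bool) := [c.1, c.2.1, c.2.2]

def clauseSat {n : ℕ} (τ : Fin n → Bool) (c : Clause3 n) : Prop :=
  ∃ l ∈ litsOf c, τ l.1 = l.2

def Sat3 {n m : ℕ} (φ : Fin m → Clause3 n) : Prop :=
  ∃ τ : Fin n → Bool, ∀ j, clauseSat τ (φ j)

end Spanners

namespace Spanners
section

variable {Sig : Type}

lemma idxOf_eq_of_getElem?_eq {α : Type*} [DecidableEq α] {l : List α} {a : α} {i : ℕ}
    (hc : l.count a ≤ 1) (h : l[i]? = some a) : l.idxOf a = i := by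
  induction l generalizing i with
  | nil => simp at h
  | cons b t ih =>
    cases i with
    | zero => simp_all
    | succ i =>
      have ht : t[i]? = some a := by simpa using h
      have hb : b ≠ a := by
        rintro rfl
        have := List.one_le_count_iff.2 (List.mem_of_getElem? ht)
        rw [List.count_cons_self] at hc
        omega
      rw [List.count_cons_of_ne hb] at hc
      rw [List.idxOf_cons_ne _ hb, ih hc ht]

lemma idxOf_le_idxOf_of_filter_eq_cons {α : Type*} [DecidableEq α] {p : α → Bool}
    {l r : List α} {a b : α} (h : l.filter p = a :: r) (hb : p b) :
    l.idxOf a ≤ l.idxOf b := by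
  induction l with
  | nil => simp at h
  | cons c t ih =>
    by_cases hc : p c
    · rw [List.filter_cons_of_pos hc, List.cons.injEq] at h
      simp [h.1]
    · rw [List.filter_cons_of_neg hc] at h
      have ha : p a := (List.mem_filter.1 (h ▸ List.mem_cons_self)).2
      rw [List.idxOf_cons_ne _ (by rintro rfl; exact hc ha),
        List.idxOf_cons_ne _ (by rintro rfl; exact hc hb)]
      exact Nat.succ_le_succ (ih h)

@[simp] lemma isLetterL_eps : isLetterL (VLabel.eps : VLabel Sig) = false := rfl
@[simp] lemma isLetterL_letter (σ : Sig) : isLetterL (VLabel.letter σ) = true := rfl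
@[simp] lemma isLetterL_openv (x : ℕ) : isLetterL (VLabel.openv x : VLabel Sig) = false := rfl
@[simp] lemma isLetterL_closev (x : ℕ) : isLetterL (VLabel.closev x : VLabel Sig) = false := rfl

def letterCount (ls : List (VLabel Sig)) : ℕ := ls.countP isLetterL

@[simp] lemma letterCount_nil : letterCount ([] : List (VLabel Sig)) = 0 := rfl

@[simp] lemma letterCount_cons (l : VLabel Sig) (ls : List (VLabel Sig)) :
    letterCount (l :: ls) = letterCount ls + if isLetterL l then 1 else 0 :=
  List.countP_cons

@[simp] lemma letterCount_append (ls₁ ls₂ : List (VLabel Sig)) :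
    letterCount (ls₁ ++ ls₂) = letterCount ls₁ + letterCount ls₂ :=
  List.countP_append

@[simp] lemma readWord_nil : readWord ([] : List (VLabel Sig)) = [] := rfl
@[simp] lemma readWord_eps_cons (ls : List (VLabel Sig)) :
    readWord (VLabel.eps :: ls) = readWord ls := rfl
@[simp] lemma readWord_letter_cons (σ : Sig) (ls : List (VLabel Sig)) :
    readWord (VLabel.letter σ :: ls) = σ :: readWord ls := rfl
@[simp] lemma readWord_openv_cons (x : ℕ) (ls : List (VLabel Sig)) :
    readWord (VLabel.openv x :: ls) = readWord ls := rfl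
@[simp] lemma readWord_closev_cons (x : ℕ) (ls : List (VLabel Sig)) :
    readWord (VLabel.closev x :: ls) = readWord ls := rfl
@[simp] lemma readWord_append (ls₁ ls₂ : List (VLabel Sig)) :
    readWord (ls₁ ++ ls₂) = readWord ls₁ ++ readWord ls₂ :=
  List.filterMap_append

lemma length_readWord (ls : List (VLabel Sig)) : (readWord ls).length = letterCount ls := by
  induction ls with
  | nil => rfl
  | cons l ls ih => cases l <;> simp [ih]

lemma mem_labelVars {x : ℕ} {l : VLabel Sig} :
    x ∈ labelVars l ↔ l = .openv x ∨ l = .closev x := by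
  cases l <;> simp [labelVars, eq_comm]

def varOps (x : ℕ) (ls : List (VLabel Sig)) : List (VLabel Sig) :=
  ls.filter fun l => x ∈ labelVars l

@[simp] lemma varOps_nil (x : ℕ) : varOps x ([] : List (VLabel Sig)) = [] := rfl

@[simp] lemma varOps_cons (x : ℕ) (l : VLabel Sig) (ls : List (VLabel Sig)) :
    varOps x (l :: ls) = if x ∈ labelVars l then l :: varOps x ls else varOps x ls := by
  simp [varOps, List.filter_cons]

@[simp] lemma varOps_append (x : ℕ) (ls₁ ls₂ : List (VLabel Sig)) :
    varOps x (ls₁ ++ ls₂) = varOps x ls₁ ++ varOps x ls₂ :=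
  List.filter_append _ _

lemma varOps_eq_nil_iff {x : ℕ} {ls : List (VLabel Sig)} :
    varOps x ls = [] ↔ VLabel.openv x ∉ ls ∧ VLabel.closev x ∉ ls := by
  simp only [varOps, List.filter_eq_nil_iff, decide_eq_true_eq, mem_labelVars, not_or]
  exact ⟨fun h => ⟨fun hm => (h _ hm).1 rfl, fun hm => (h _ hm).2 rfl⟩,
    fun h l hl => ⟨by rintro rfl; exact h.1 hl, by rintro rfl; exact h.2 hl⟩⟩

def WellNested (vs : Finset ℕ) (ls : List (VLabel Sig)) : Prop :=
  ∀ x, varOps x ls = [] ∨ x ∈ vs ∧ varOps x ls = [.openv x, .closev x]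

namespace WellNested

variable {vs vs₁ vs₂ : Finset ℕ} {ls ls₁ ls₂ : List (VLabel Sig)}

lemma of_forall_varOps_eq_nil (h : ∀ x, varOps x ls = []) : WellNested vs ls :=
  fun x => Or.inl (h x)

lemma mono (h : WellNested vs₁ ls) (hsub : vs₁ ⊆ vs₂) : WellNested vs₂ ls :=
  fun x => (h x).imp_right fun hx => ⟨hsub hx.1, hx.2⟩

lemma varOps_eq_nil (h : WellNested vs ls) {x : ℕ} (hx : x ∉ vs) : varOps x ls = [] :=
  (h x).resolve_right fun h' => hx h'.1

lemma varOps_eq_of_openv_mem (h : WellNested vs ls) {x : ℕ} (hx : VLabel.openv x ∈ ls) :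
    varOps x ls = [.openv x, .closev x] :=
  ((h x).resolve_left fun h' => (varOps_eq_nil_iff.1 h').1 hx).2

lemma openv_mem_iff (h : WellNested vs ls) (x : ℕ) :
    VLabel.openv x ∈ ls ↔ VLabel.closev x ∈ ls := by
  have hmem (l : VLabel Sig) (hl : x ∈ labelVars l) : l ∈ varOps x ls ↔ l ∈ ls := by
    simp [varOps, hl]
  rw [← hmem _ (by simp [labelVars]), ← hmem _ (by simp [labelVars])]
  rcases h x with h' | ⟨-, h'⟩ <;> simp [h']

lemma eps_cons (h : WellNested vs ls) : WellNested vs (.eps :: ls) := by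
  intro x; simpa [labelVars] using h x

lemma append (h₁ : WellNested vs₁ ls₁) (h₂ : WellNested vs₂ ls₂) (hd : Disjoint vs₁ vs₂) :
    WellNested (vs₁ ∪ vs₂) (ls₁ ++ ls₂) := by
  intro x
  rw [varOps_append]
  rcases h₁ x with h1 | ⟨hx1, h1⟩
  · rcases h₂ x with h2 | ⟨hx2, h2⟩ <;> simp [*]
  · simp [h1, hx1, h₂.varOps_eq_nil (Finset.disjoint_left.1 hd hx1)]

lemma append_eps (h : WellNested vs ls) : WellNested vs (ls ++ [.eps]) := by
  intro x; simpa [labelVars] using h x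

lemma bind (h : WellNested vs ls) {x : ℕ} (hx : x ∉ vs) :
    WellNested (insert x vs) (.openv x :: ls ++ [.closev x]) := by
  intro y
  by_cases hxy : y = x
  · subst hxy
    simp [labelVars, h.varOps_eq_nil hx]
  · simpa [labelVars, hxy] using h y

end WellNested

lemma size_pos (γ : RGX Sig) : 1 ≤ γ.size := by
  cases γ <;> simp [RGX.size]

/-- The label sequences of the accepting runs of the automaton `thompson γ n` built below
(`acceptsWith_thompson_iff`); they are the ref-words of `γ`, padded with `ε`-labels. -/
inductive Trace : RGX Sig → List (VLabel Sig) → Prop where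
  | eps : Trace .eps [.eps]
  | letter (σ : Sig) : Trace (.letter σ) [.letter σ]
  | unionL {a b : RGX Sig} {ls : List (VLabel Sig)} :
      Trace a ls → Trace (.union a b) (.eps :: ls ++ [.eps])
  | unionR {a b : RGX Sig} {ls : List (VLabel Sig)} :
      Trace b ls → Trace (.union a b) (.eps :: ls ++ [.eps])
  | concat {a b : RGX Sig} {ls₁ ls₂ : List (VLabel Sig)} :
      Trace a ls₁ → Trace b ls₂ → Trace (.concat a b) (.eps :: ls₁ ++ .eps :: ls₂ ++ [.eps])
  | starNil {a : RGX Sig} : Trace (.star a) [.eps]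
  | starCons {a : RGX Sig} {ls₁ ls₂ : List (VLabel Sig)} :
      Trace a ls₁ → Trace (.star a) ls₂ → Trace (.star a) (.eps :: ls₁ ++ .eps :: ls₂)
  | bind {x : ℕ} {a : RGX Sig} {ls : List (VLabel Sig)} :
      Trace a ls → Trace (.bind x a) (.openv x :: ls ++ [.closev x])

namespace Trace

variable {γ : RGX Sig} {ls : List (VLabel Sig)}

lemma wellNested (h : Trace γ ls) (hγ : γ.Sequential) : WellNested γ.vars ls := by
  induction h with
  | eps | letter _ | starNil => exact .of_forall_varOps_eq_nil (by simp [labelVars])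
  | unionL _ ih => exact ((ih hγ.1).mono Finset.subset_union_left).eps_cons.append_eps
  | unionR _ ih => exact ((ih hγ.2).mono Finset.subset_union_right).eps_cons.append_eps
  | concat _ _ ih₁ ih₂ => exact ((ih₁ hγ.1).eps_cons.append (ih₂ hγ.2.1).eps_cons hγ.2.2).append_eps
  | @starCons a _ _ _ _ ih₁ ih₂ =>
    have hv : a.vars = ∅ := hγ.2
    have := (ih₁ hγ.1).eps_cons.append (ih₂ hγ).eps_cons (by simp [hv])
    exact this.mono (by simp [RGX.vars])
  | bind _ ih => exact (ih hγ.1).bind hγ.2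

lemma openv_mem_of_syncFor (h : Trace γ ls) (hγ : γ.Sequential) {x : ℕ} (hx : γ.SyncFor x)
    (hxγ : x ∈ γ.vars) : VLabel.openv x ∈ ls := by
  induction h with
  | eps | letter _ => simp [RGX.vars] at hxγ
  | unionL _ _ | unionR _ _ => exact absurd hxγ (by simp [RGX.vars, hx.1.1, hx.1.2])
  | concat _ _ ih₁ ih₂ =>
    rcases Finset.mem_union.1 hxγ with hxa | hxb
    · simp [ih₁ hγ.1 hx.1 hxa]
    · simp [ih₂ hγ.2.1 hx.2 hxb]
  | starNil | starCons _ _ _ _ => simp [RGX.vars, hγ.2] at hxγ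
  | @bind y _ _ _ ih =>
    by_cases hxy : x = y
    · simp [hxy]
    · simp [ih hγ.1 hx (by simpa [RGX.vars, hxy] using hxγ)]

end Trace

end

variable {Sig : Type} [DecidableEq Sig]

lemma WellNested.count_le_one {vs : Finset ℕ} {ls : List (VLabel Sig)} (h : WellNested vs ls)
    {x : ℕ} {l : VLabel Sig} (hl : x ∈ labelVars l) : ls.count l ≤ 1 := by
  rw [← List.count_filter (p := fun l => x ∈ labelVars l) (by simpa using hl)]
  rcases mem_labelVars.1 hl with rfl | rfl <;>
    rcases h x with h' | ⟨-, h'⟩ <;> simp only [varOps] at h' <;> simp [h']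

lemma WellNested.validLabels {vs : Finset ℕ} {ls : List (VLabel Sig)} (h : WellNested vs ls) :
    ValidLabels ls := by
  intro x
  have hco := h.count_le_one (x := x) (l := .openv x) (by simp [labelVars])
  have hcc := h.count_le_one (x := x) (l := .closev x) (by simp [labelVars])
  refine ⟨hco, hcc, h.openv_mem_iff x, fun i j hi hj => ?_⟩
  have hij : ls.idxOf (VLabel.openv x) ≤ ls.idxOf (VLabel.closev x) :=
    idxOf_le_idxOf_of_filter_eq_cons (h.varOps_eq_of_openv_mem (List.mem_of_getElem? hi))
      (by simp [labelVars])
  rw [idxOf_eq_of_getElem?_eq hco hi, idxOf_eq_of_getElem?_eq hcc hj] at hij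
  exact Nat.add_le_add_left (List.take_sublist_take_left hij).countP_le 1

/-- If `l` does not occur in `ls`, this is the end position `i + letterCount ls`. -/
def firstPos (i : ℕ) (ls : List (VLabel Sig)) (l : VLabel Sig) : ℕ :=
  i + letterCount (ls.take (ls.idxOf l))

lemma firstPos_of_not_mem {i : ℕ} {ls : List (VLabel Sig)} {l : VLabel Sig} (h : l ∉ ls) :
    firstPos i ls l = i + letterCount ls := by
  rw [firstPos, List.idxOf_eq_length h, List.take_length]

lemma firstPos_append (i : ℕ) (ls₁ ls₂ : List (VLabel Sig)) (l : VLabel Sig) :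
    firstPos i (ls₁ ++ ls₂) l =
      if l ∈ ls₁ then firstPos i ls₁ l else firstPos (i + letterCount ls₁) ls₂ l := by
  unfold firstPos
  split_ifs with h
  · rw [List.idxOf_append_of_mem h, List.take_append_of_le_length List.idxOf_le_length]
  · rw [List.idxOf_append_of_notMem h, List.take_length_add_append, letterCount_append,
      add_assoc]

lemma firstPos_cons (i : ℕ) (l' : VLabel Sig) (ls : List (VLabel Sig)) (l : VLabel Sig) :
    firstPos i (l' :: ls) l =
      if l' = l then i else firstPos (i + if isLetterL l' then 1 else 0) ls l := by
  rw [← List.singleton_append, firstPos_append]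
  by_cases h : l' = l
  · simp [h, firstPos]
  · simp [h, Ne.symm h]

def traceMapping (i : ℕ) (ls : List (VLabel Sig)) : VMapping := fun x =>
  if VLabel.openv x ∈ ls then
    some (firstPos i ls (VLabel.openv x), firstPos i ls (VLabel.closev x))
  else none

lemma runMapping_eq_traceMapping (ls : List (VLabel Sig)) :
    runMapping ls = traceMapping 1 ls := rfl

lemma traceMapping_eq_emptyMapping {i : ℕ} {ls : List (VLabel Sig)}
    (h : ∀ x, VLabel.openv x ∉ ls) : traceMapping i ls = emptyMapping :=
  funext fun x => if_neg (h x)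

lemma traceMapping_append {vs : Finset ℕ} {ls₁ : List (VLabel Sig)} (h : WellNested vs ls₁)
    (i : ℕ) (ls₂ : List (VLabel Sig)) :
    traceMapping i (ls₁ ++ ls₂) =
      munion (traceMapping i ls₁) (traceMapping (i + letterCount ls₁) ls₂) := by
  funext x
  by_cases h₁ : VLabel.openv x ∈ ls₁
  · simp [traceMapping, munion, firstPos_append, h₁, (h.openv_mem_iff x).1 h₁]
  · simp [traceMapping, munion, firstPos_append, h₁, mt (h.openv_mem_iff x).2 h₁]

@[simp] lemma traceMapping_eps_cons (i : ℕ) (ls : List (VLabel Sig)) :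
    traceMapping i (.eps :: ls) = traceMapping i ls := by
  funext x
  simp [traceMapping, firstPos_cons]

@[simp] lemma traceMapping_append_eps (i : ℕ) (ls : List (VLabel Sig)) :
    traceMapping i (ls ++ [.eps]) = traceMapping i ls := by
  funext x
  simp only [traceMapping, List.mem_append, List.mem_singleton, reduceCtorEq, or_false,
    firstPos_append]
  split_ifs with h₁ h₂ <;> simp [firstPos_of_not_mem, *]

lemma traceMapping_bind {vs : Finset ℕ} {ls : List (VLabel Sig)} (h : WellNested vs ls)
    (i : ℕ) {x : ℕ} (hx : x ∉ vs) :
    traceMapping i (.openv x :: ls ++ [.closev x]) =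
      minsert x (i, i + letterCount ls) (traceMapping i ls) := by
  have hnil := varOps_eq_nil_iff.1 (h.varOps_eq_nil hx)
  funext y
  by_cases hxy : y = x
  · subst hxy
    simp [traceMapping, minsert, firstPos_cons, firstPos_append, hnil.2]
  · by_cases hy : VLabel.openv y ∈ ls
    · simp [traceMapping, minsert, firstPos_cons, firstPos_append, hxy, hy,
        (h.openv_mem_iff y).1 hy, Ne.symm hxy]
    · simp [traceMapping, minsert, hxy, hy]

lemma disjointDom_traceMapping {vs₁ vs₂ : Finset ℕ} {ls₁ ls₂ : List (VLabel Sig)}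
    (h₁ : WellNested vs₁ ls₁) (h₂ : WellNested vs₂ ls₂) (hd : Disjoint vs₁ vs₂) (i j : ℕ) :
    DisjointDom (traceMapping i ls₁) (traceMapping j ls₂) := by
  intro x
  by_cases hx : x ∈ vs₁
  · exact Or.inr (if_neg (varOps_eq_nil_iff.1 (h₂.varOps_eq_nil
      (Finset.disjoint_left.1 hd hx))).1)
  · exact Or.inl (if_neg (varOps_eq_nil_iff.1 (h₁.varOps_eq_nil hx)).1)

lemma Trace.rmatch {γ : RGX Sig} {ls : List (VLabel Sig)} (h : Trace γ ls) (hγ : γ.Sequential)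
    (pre suf : List Sig) :
    RMatch γ (pre ++ readWord ls ++ suf) (pre.length + 1) (pre.length + 1 + letterCount ls)
      (traceMapping (pre.length + 1) ls) := by
  induction h generalizing pre suf with
  | eps =>
    simpa [traceMapping_eq_emptyMapping] using RMatch.eps (d := pre ++ suf) (by omega) (by simp)
  | starNil =>
    simpa [traceMapping_eq_emptyMapping] using RMatch.starNil (d := pre ++ suf) (by omega) (by simp)
  | letter σ =>
    simpa [traceMapping_eq_emptyMapping] using
      RMatch.letter (d := pre ++ [σ] ++ suf) (i := pre.length + 1) (by omega) (by simp)
  | unionL _ ih => simpa using RMatch.unionL (ih hγ.1 pre suf)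
  | unionR _ ih => simpa using RMatch.unionR (ih hγ.2 pre suf)
  | @concat a b ls₁ ls₂ h₁ h₂ ih₁ ih₂ =>
    have g₁ := h₁.wellNested hγ.1
    have m₁ := ih₁ hγ.1 pre (readWord ls₂ ++ suf)
    have m₂ := ih₂ hγ.2.1 (pre ++ readWord ls₁) suf
    simp only [List.length_append, length_readWord, List.append_assoc] at m₁ m₂
    rw [Nat.add_right_comm] at m₂
    have := RMatch.concat m₁ m₂
      (disjointDom_traceMapping g₁ (h₂.wellNested hγ.2.1) hγ.2.2 _ _)
    rw [traceMapping_append_eps, traceMapping_append g₁.eps_cons]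
    simpa [add_assoc] using this
  | @starCons a ls₁ ls₂ h₁ h₂ ih₁ ih₂ =>
    have hv : a.vars = ∅ := hγ.2
    have m₁ := ih₁ hγ.1 pre (readWord ls₂ ++ suf)
    have m₂ := ih₂ hγ (pre ++ readWord ls₁) suf
    simp only [List.length_append, length_readWord, List.append_assoc] at m₁ m₂
    rw [Nat.add_right_comm] at m₂
    have := RMatch.starCons m₁ m₂
      (disjointDom_traceMapping (h₁.wellNested hγ.1) (h₂.wellNested hγ) (by simp [hv]) _ _)
    rw [traceMapping_append (h₁.wellNested hγ.1).eps_cons]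
    simpa [add_assoc] using this
  | @bind x a ls h ih =>
    have g := h.wellNested hγ.1
    rw [traceMapping_bind g _ hγ.2]
    simpa using RMatch.bind (ih hγ.1 pre suf)
      (if_neg (varOps_eq_nil_iff.1 (g.varOps_eq_nil hγ.2)).1)

lemma RMatch.exists_trace {γ : RGX Sig} {d : List Sig} {i j : ℕ} {μ : VMapping}
    (h : RMatch γ d i j μ) (hγ : γ.Sequential) :
    ∃ ls, Trace γ ls ∧ j = i + letterCount ls ∧
      d.drop (i - 1) = readWord ls ++ d.drop (j - 1) ∧ μ = traceMapping i ls := by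
  induction h with
  | eps => exact ⟨[.eps], .eps, by simp, by simp, (traceMapping_eq_emptyMapping (by simp)).symm⟩
  | starNil =>
    exact ⟨[.eps], .starNil, by simp, by simp, (traceMapping_eq_emptyMapping (by simp)).symm⟩
  | @letter d i σ h₁ h₂ =>
    refine ⟨[.letter σ], .letter σ, by simp, ?_, (traceMapping_eq_emptyMapping (by simp)).symm⟩
    obtain ⟨hlt, hσ⟩ := List.getElem?_eq_some_iff.1 h₂
    rw [List.drop_eq_getElem_cons hlt, hσ, Nat.sub_add_cancel h₁]
    simp
  | unionL _ ih =>
    obtain ⟨ls, ht, hj, hd, hμ⟩ := ih hγ.1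
    exact ⟨_, .unionL ht, by simpa using hj, by simpa using hd, by simpa using hμ⟩
  | unionR _ ih =>
    obtain ⟨ls, ht, hj, hd, hμ⟩ := ih hγ.2
    exact ⟨_, .unionR ht, by simpa using hj, by simpa using hd, by simpa using hμ⟩
  | concat _ _ _ ih₁ ih₂ =>
    obtain ⟨ls₁, ht₁, hj₁, hd₁, rfl⟩ := ih₁ hγ.1
    obtain ⟨ls₂, ht₂, hj₂, hd₂, rfl⟩ := ih₂ hγ.2.1
    refine ⟨_, .concat ht₁ ht₂, by simp; omega, by simp [hd₁, hd₂], ?_⟩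
    rw [traceMapping_append_eps, traceMapping_append (ht₁.wellNested hγ.1).eps_cons]
    simp [hj₁]
  | starCons _ _ _ ih₁ ih₂ =>
    obtain ⟨ls₁, ht₁, hj₁, hd₁, rfl⟩ := ih₁ hγ.1
    obtain ⟨ls₂, ht₂, hj₂, hd₂, rfl⟩ := ih₂ hγ
    refine ⟨_, .starCons ht₁ ht₂, by simp; omega, by simp [hd₁, hd₂], ?_⟩
    rw [traceMapping_append (ht₁.wellNested hγ.1).eps_cons]
    simp [hj₁]
  | bind _ _ ih =>
    obtain ⟨ls, ht, hj, hd, rfl⟩ := ih hγ.1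
    refine ⟨_, .bind ht, by simpa using hj, by simpa using hd, ?_⟩
    rw [traceMapping_bind (ht.wellNested hγ.1) _ hγ.2, hj]

/-- Thompson's construction. The fragment of `γ` at offset `n` lives on the states
`n, …, n + 2 * γ.size - 1`, is entered in `n` and left from `n + 1`; the subformulas of `γ` get
the fragments at offsets `n + 2` and `n + 2 + 2 * a.size`. -/
def thompsonδ : RGX Sig → ℕ → Finset (ℕ × VLabel Sig × ℕ)
  | .empty, _ => ∅
  | .eps, n => {(n, .eps, n + 1)}
  | .letter σ, n => {(n, .letter σ, n + 1)}
  | .union a b, n =>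
      thompsonδ a (n + 2) ∪ thompsonδ b (n + 2 + 2 * a.size) ∪
      {(n, .eps, n + 2), (n, .eps, n + 2 + 2 * a.size),
       (n + 3, .eps, n + 1), (n + 2 + 2 * a.size + 1, .eps, n + 1)}
  | .concat a b, n =>
      thompsonδ a (n + 2) ∪ thompsonδ b (n + 2 + 2 * a.size) ∪
      {(n, .eps, n + 2), (n + 3, .eps, n + 2 + 2 * a.size),
       (n + 2 + 2 * a.size + 1, .eps, n + 1)}
  | .star a, n =>
      thompsonδ a (n + 2) ∪
      {(n, .eps, n + 1), (n, .eps, n + 2), (n + 3, .eps, n)}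
  | .bind x a, n =>
      thompsonδ a (n + 2) ∪ {(n, .openv x, n + 2), (n + 3, .closev x, n + 1)}

def thompson (γ : RGX Sig) (n : ℕ) : VA Sig := ⟨n, {n + 1}, thompsonδ γ n⟩

lemma thompsonδ_bounds {γ : RGX Sig} {n p q : ℕ} {l : VLabel Sig}
    (h : (p, l, q) ∈ thompsonδ γ n) :
    n ≤ p ∧ p < n + 2 * γ.size ∧ p ≠ n + 1 ∧ n ≤ q ∧ q < n + 2 * γ.size := by
  induction γ generalizing n p q with
  | empty => simp [thompsonδ] at h
  | eps | letter _ =>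
    simp only [thompsonδ, Finset.mem_singleton, Prod.mk.injEq] at h
    obtain ⟨rfl, -, rfl⟩ := h
    simp [RGX.size]
  | union a b iha ihb | concat a b iha ihb =>
    have := size_pos a; have := size_pos b
    simp only [thompsonδ, RGX.size, Finset.mem_union, Finset.mem_insert, Finset.mem_singleton,
      Prod.mk.injEq] at h ⊢
    rcases h with (h | h) | h
    · have := iha h; omega
    · have := ihb h; omega
    · omega
  | star a ih | bind _ a ih =>
    have := size_pos a
    simp only [thompsonδ, RGX.size, Finset.mem_union, Finset.mem_insert, Finset.mem_singleton,
      Prod.mk.injEq] at h ⊢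
    rcases h with h | h
    · have := ih h; omega
    · omega

namespace VA

variable {A B : VA Sig}

lemma PathFrom.mono (hAB : A.δ ⊆ B.δ) {p q : ℕ} {ls : List (VLabel Sig)}
    (h : A.PathFrom p ls q) : B.PathFrom p ls q := by
  induction h with
  | nil q => exact .nil q
  | cons h _ ih => exact .cons (hAB h) ih

lemma PathFrom.append {p q r : ℕ} {ls₁ ls₂ : List (VLabel Sig)} (h₁ : A.PathFrom p ls₁ q)
    (h₂ : A.PathFrom q ls₂ r) : A.PathFrom p (ls₁ ++ ls₂) r := by
  induction h₁ with
  | nil _ => exact h₂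
  | cons h _ ih => exact .cons h (ih h₂)

lemma PathFrom.split_at_exit {lo hi e tgt : ℕ}
    (hA : ∀ p l q, (p, l, q) ∈ A.δ → lo ≤ q ∧ q < hi)
    (hB : ∀ p l q, (p, l, q) ∈ B.δ → lo ≤ p → p < hi → p ≠ e → (p, l, q) ∈ A.δ)
    {p : ℕ} {ls : List (VLabel Sig)} (h : B.PathFrom p ls tgt) (hp : lo ≤ p ∧ p < hi)
    (htgt : tgt < lo ∨ hi ≤ tgt) :
    ∃ ls₁ l q ls₂, ls = ls₁ ++ l :: ls₂ ∧ A.PathFrom p ls₁ e ∧ (e, l, q) ∈ B.δ ∧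
      B.PathFrom q ls₂ tgt := by
  induction h with
  | nil => omega
  | @cons p q r l ls hpq hqr ih =>
    by_cases hpe : p = e
    · exact ⟨[], l, q, ls, rfl, hpe ▸ .nil p, hpe ▸ hpq, hqr⟩
    · have hA' := hB _ _ _ hpq hp.1 hp.2 hpe
      obtain ⟨ls₁, l', q', ls₂, rfl, h₁, he, h₂⟩ := ih (hA _ _ _ hA') htgt
      exact ⟨l :: ls₁, l', q', ls₂, rfl, .cons hA' h₁, he, h₂⟩

end VA

namespace Trace

lemma pathFrom {γ : RGX Sig} {ls : List (VLabel Sig)} (h : Trace γ ls) (n : ℕ) :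
    (thompson γ n).PathFrom n ls (n + 1) := by
  induction h generalizing n with
  | eps | letter _ | starNil => exact .cons (by simp [thompson, thompsonδ]) (.nil _)
  | @unionL a b _ _ ih =>
    exact .cons (by simp [thompson, thompsonδ])
      (((ih (n + 2)).mono fun t ht => by simp_all [thompson, thompsonδ]).append
        (.cons (by simp [thompson, thompsonδ]) (.nil _)))
  | @unionR a b _ _ ih =>
    exact .cons (by simp [thompson, thompsonδ])
      (((ih (n + 2 + 2 * a.size)).mono fun t ht => by simp_all [thompson, thompsonδ]).append
        (.cons (by simp [thompson, thompsonδ]) (.nil _)))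
  | @concat a b _ _ _ _ ih₁ ih₂ =>
    simp only [List.cons_append, List.append_assoc]
    exact .cons (by simp [thompson, thompsonδ])
      (((ih₁ (n + 2)).mono fun t ht => by simp_all [thompson, thompsonδ]).append
        (.cons (by simp [thompson, thompsonδ])
          (((ih₂ (n + 2 + 2 * a.size)).mono fun t ht => by simp_all [thompson, thompsonδ]).append
            (.cons (by simp [thompson, thompsonδ]) (.nil _)))))
  | @starCons a _ _ _ _ ih₁ ih₂ =>
    simp only [List.cons_append]
    exact .cons (by simp [thompson, thompsonδ])
      (((ih₁ (n + 2)).mono fun t ht => by simp_all [thompson, thompsonδ]).append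
        (.cons (by simp [thompson, thompsonδ]) (ih₂ n)))
  | @bind x a _ _ ih =>
    simp only [List.cons_append]
    exact .cons (by simp [thompson, thompsonδ])
      (((ih (n + 2)).mono fun t ht => by simp_all [thompson, thompsonδ]).append
        (.cons (by simp [thompson, thompsonδ]) (.nil _)))

end Trace

lemma thompson_pathFrom_final {γ : RGX Sig} {n q : ℕ} {ls : List (VLabel Sig)}
    (h : (thompson γ n).PathFrom (n + 1) ls q) : ls = [] ∧ q = n + 1 := by
  cases h with
  | nil => exact ⟨rfl, rfl⟩
  | cons h' _ => exact absurd rfl (thompsonδ_bounds h').2.2.1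

lemma exists_trace_of_pathFrom_fragment {T : VA Sig} {a : RGX Sig} {m tgt : ℕ}
    {ls : List (VLabel Sig)}
    (iha : ∀ ls, (thompson a m).PathFrom m ls (m + 1) → Trace a ls)
    (hT : ∀ p l q, (p, l, q) ∈ T.δ → m ≤ p → p < m + 2 * a.size → p ≠ m + 1 →
      (p, l, q) ∈ thompsonδ a m)
    (h : T.PathFrom m ls tgt) (htgt : tgt < m ∨ m + 2 * a.size ≤ tgt) :
    ∃ ls₁ l q ls₂, ls = ls₁ ++ l :: ls₂ ∧ Trace a ls₁ ∧ (m + 1, l, q) ∈ T.δ ∧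
      T.PathFrom q ls₂ tgt := by
  have := size_pos a
  obtain ⟨ls₁, l, q, ls₂, rfl, h₁, he, h₂⟩ :=
    h.split_at_exit (A := thompson a m) (fun _ _ _ h => ⟨(thompsonδ_bounds h).2.2.2.1,
      (thompsonδ_bounds h).2.2.2.2⟩) hT (by omega) htgt
  exact ⟨ls₁, l, q, ls₂, rfl, iha ls₁ h₁, he, h₂⟩

section Fragments

variable {a b : RGX Sig} {x n p q : ℕ} {l : VLabel Sig}

lemma thompsonδ_union_left (hm : (p, l, q) ∈ thompsonδ (.union a b) n) (h₁ : n + 2 ≤ p)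
    (h₂ : p < n + 2 + 2 * a.size) (h₃ : p ≠ n + 2 + 1) : (p, l, q) ∈ thompsonδ a (n + 2) := by
  simp only [thompsonδ, Finset.mem_union, Finset.mem_insert, Finset.mem_singleton,
    Prod.mk.injEq] at hm
  rcases hm with (hm | hm) | hm
  · exact hm
  · have := thompsonδ_bounds hm; omega
  · omega

lemma thompsonδ_union_right (hm : (p, l, q) ∈ thompsonδ (.union a b) n)
    (h₁ : n + 2 + 2 * a.size ≤ p) (h₃ : p ≠ n + 2 + 2 * a.size + 1) :
    (p, l, q) ∈ thompsonδ b (n + 2 + 2 * a.size) := by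
  simp only [thompsonδ, Finset.mem_union, Finset.mem_insert, Finset.mem_singleton,
    Prod.mk.injEq] at hm
  rcases hm with (hm | hm) | hm
  · have := thompsonδ_bounds hm; omega
  · exact hm
  · omega

lemma thompsonδ_concat_left (hm : (p, l, q) ∈ thompsonδ (.concat a b) n) (h₁ : n + 2 ≤ p)
    (h₂ : p < n + 2 + 2 * a.size) (h₃ : p ≠ n + 2 + 1) : (p, l, q) ∈ thompsonδ a (n + 2) := by
  simp only [thompsonδ, Finset.mem_union, Finset.mem_insert, Finset.mem_singleton,
    Prod.mk.injEq] at hm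
  rcases hm with (hm | hm) | hm
  · exact hm
  · have := thompsonδ_bounds hm; omega
  · omega

lemma thompsonδ_concat_right (hm : (p, l, q) ∈ thompsonδ (.concat a b) n)
    (h₁ : n + 2 + 2 * a.size ≤ p) (h₃ : p ≠ n + 2 + 2 * a.size + 1) :
    (p, l, q) ∈ thompsonδ b (n + 2 + 2 * a.size) := by
  simp only [thompsonδ, Finset.mem_union, Finset.mem_insert, Finset.mem_singleton,
    Prod.mk.injEq] at hm
  rcases hm with (hm | hm) | hm
  · have := thompsonδ_bounds hm; omega
  · exact hm
  · omega

lemma thompsonδ_star_inner (hm : (p, l, q) ∈ thompsonδ (.star a) n) (h₁ : n + 2 ≤ p)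
    (h₃ : p ≠ n + 2 + 1) : (p, l, q) ∈ thompsonδ a (n + 2) := by
  simp only [thompsonδ, Finset.mem_union, Finset.mem_insert, Finset.mem_singleton,
    Prod.mk.injEq] at hm
  rcases hm with hm | hm
  · exact hm
  · omega

lemma thompsonδ_bind_inner (hm : (p, l, q) ∈ thompsonδ (.bind x a) n) (h₁ : n + 2 ≤ p)
    (h₃ : p ≠ n + 2 + 1) : (p, l, q) ∈ thompsonδ a (n + 2) := by
  simp only [thompsonδ, Finset.mem_union, Finset.mem_insert, Finset.mem_singleton,
    Prod.mk.injEq] at hm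
  rcases hm with hm | hm
  · exact hm
  · omega

end Fragments

section OfPathFrom

variable {a b : RGX Sig} {n : ℕ} {ls : List (VLabel Sig)}

lemma Trace.of_pathFrom_union
    (iha : ∀ n ls, (thompson a n).PathFrom n ls (n + 1) → Trace a ls)
    (ihb : ∀ n ls, (thompson b n).PathFrom n ls (n + 1) → Trace b ls)
    (h : (thompson (.union a b) n).PathFrom n ls (n + 1)) : Trace (.union a b) ls := by
  have := size_pos a; have := size_pos b
  obtain _ | ⟨h₀, h⟩ := h
  simp only [thompson, thompsonδ, Finset.mem_union, Finset.mem_insert, Finset.mem_singleton,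
    Prod.mk.injEq] at h₀
  rcases h₀ with (h₀ | h₀) | ⟨-, rfl, rfl⟩ | ⟨-, rfl, rfl⟩ | ⟨_, -, -⟩ | ⟨_, -, -⟩
  · have := thompsonδ_bounds h₀; omega
  · have := thompsonδ_bounds h₀; omega
  · obtain ⟨ls₁, l, q, ls₂, rfl, ht, he, h⟩ := exists_trace_of_pathFrom_fragment (iha _)
      (fun _ _ _ => thompsonδ_union_left) h (by omega)
    simp only [thompson, thompsonδ, Finset.mem_union, Finset.mem_insert, Finset.mem_singleton,
      Prod.mk.injEq] at he
    rcases he with (he | he) | ⟨_, -, -⟩ | ⟨_, -, -⟩ | ⟨-, rfl, rfl⟩ | ⟨_, -, -⟩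
    · exact absurd rfl (thompsonδ_bounds he).2.2.1
    · have := thompsonδ_bounds he; omega
    · omega
    · omega
    · obtain ⟨rfl, -⟩ := thompson_pathFrom_final h
      simpa using ht.unionL (b := b)
    · omega
  · obtain ⟨ls₁, l, q, ls₂, rfl, ht, he, h⟩ := exists_trace_of_pathFrom_fragment (ihb _)
      (fun _ _ _ hm h₁ _ h₃ => thompsonδ_union_right hm h₁ h₃) h (by omega)
    simp only [thompson, thompsonδ, Finset.mem_union, Finset.mem_insert, Finset.mem_singleton,
      Prod.mk.injEq] at he
    rcases he with (he | he) | ⟨_, -, -⟩ | ⟨_, -, -⟩ | ⟨_, -, -⟩ | ⟨-, rfl, rfl⟩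
    · have := thompsonδ_bounds he; omega
    · exact absurd rfl (thompsonδ_bounds he).2.2.1
    · omega
    · omega
    · omega
    · obtain ⟨rfl, -⟩ := thompson_pathFrom_final h
      simpa using ht.unionR (a := a)
  · omega
  · omega

lemma Trace.of_pathFrom_concat
    (iha : ∀ n ls, (thompson a n).PathFrom n ls (n + 1) → Trace a ls)
    (ihb : ∀ n ls, (thompson b n).PathFrom n ls (n + 1) → Trace b ls)
    (h : (thompson (.concat a b) n).PathFrom n ls (n + 1)) : Trace (.concat a b) ls := by
  have := size_pos a; have := size_pos b
  obtain _ | ⟨h₀, h⟩ := h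
  simp only [thompson, thompsonδ, Finset.mem_union, Finset.mem_insert, Finset.mem_singleton,
    Prod.mk.injEq] at h₀
  rcases h₀ with (h₀ | h₀) | ⟨-, rfl, rfl⟩ | ⟨_, -, -⟩ | ⟨_, -, -⟩
  · have := thompsonδ_bounds h₀; omega
  · have := thompsonδ_bounds h₀; omega
  · obtain ⟨ls₁, l, q, ls₂, rfl, ht₁, he, h⟩ := exists_trace_of_pathFrom_fragment (iha _)
      (fun _ _ _ => thompsonδ_concat_left) h (by omega)
    simp only [thompson, thompsonδ, Finset.mem_union, Finset.mem_insert, Finset.mem_singleton,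
      Prod.mk.injEq] at he
    rcases he with (he | he) | ⟨_, -, -⟩ | ⟨-, rfl, rfl⟩ | ⟨_, -, -⟩
    · exact absurd rfl (thompsonδ_bounds he).2.2.1
    · have := thompsonδ_bounds he; omega
    · omega
    · obtain ⟨ls₂, l, q, ls₃, rfl, ht₂, he, h⟩ := exists_trace_of_pathFrom_fragment (ihb _)
        (fun _ _ _ hm h₁ _ h₃ => thompsonδ_concat_right hm h₁ h₃) h (by omega)
      simp only [thompson, thompsonδ, Finset.mem_union, Finset.mem_insert,
        Finset.mem_singleton, Prod.mk.injEq] at he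
      rcases he with (he | he) | ⟨_, -, -⟩ | ⟨_, -, -⟩ | ⟨-, rfl, rfl⟩
      · have := thompsonδ_bounds he; omega
      · exact absurd rfl (thompsonδ_bounds he).2.2.1
      · omega
      · omega
      · obtain ⟨rfl, -⟩ := thompson_pathFrom_final h
        simpa using ht₁.concat ht₂
    · omega
  · omega
  · omega

lemma Trace.of_pathFrom_star
    (iha : ∀ n ls, (thompson a n).PathFrom n ls (n + 1) → Trace a ls)
    (h : (thompson (.star a) n).PathFrom n ls (n + 1)) : Trace (.star a) ls := by
  have := size_pos a
  induction hlen : ls.length using Nat.strong_induction_on generalizing ls with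
  | _ k ih =>
  obtain _ | ⟨h₀, h⟩ := h
  simp only [thompson, thompsonδ, Finset.mem_union, Finset.mem_insert, Finset.mem_singleton,
    Prod.mk.injEq] at h₀
  rcases h₀ with h₀ | ⟨-, rfl, rfl⟩ | ⟨-, rfl, rfl⟩ | ⟨_, -, -⟩
  · have := thompsonδ_bounds h₀; omega
  · obtain ⟨rfl, -⟩ := thompson_pathFrom_final h
    exact .starNil
  · obtain ⟨ls₁, l, q, ls₂, rfl, ht, he, hrest⟩ := exists_trace_of_pathFrom_fragment (iha _)
      (fun _ _ _ hm h₁ _ h₃ => thompsonδ_star_inner hm h₁ h₃) h (by omega)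
    simp only [thompson, thompsonδ, Finset.mem_union, Finset.mem_insert, Finset.mem_singleton,
      Prod.mk.injEq] at he
    rcases he with he | ⟨_, -, -⟩ | ⟨_, -, -⟩ | ⟨-, rfl, rfl⟩
    · exact absurd rfl (thompsonδ_bounds he).2.2.1
    · omega
    · omega
    · exact ht.starCons (ih _ (by simp [← hlen]; omega) hrest rfl)
  · omega

lemma Trace.of_pathFrom_bind {x : ℕ}
    (iha : ∀ n ls, (thompson a n).PathFrom n ls (n + 1) → Trace a ls)
    (h : (thompson (.bind x a) n).PathFrom n ls (n + 1)) : Trace (.bind x a) ls := by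
  have := size_pos a
  obtain _ | ⟨h₀, h⟩ := h
  simp only [thompson, thompsonδ, Finset.mem_union, Finset.mem_insert, Finset.mem_singleton,
    Prod.mk.injEq] at h₀
  rcases h₀ with h₀ | ⟨-, rfl, rfl⟩ | ⟨_, -, -⟩
  · have := thompsonδ_bounds h₀; omega
  · obtain ⟨ls₁, l, q, ls₂, rfl, ht, he, h⟩ := exists_trace_of_pathFrom_fragment (iha _)
      (fun _ _ _ hm h₁ _ h₃ => thompsonδ_bind_inner hm h₁ h₃) h (by omega)
    simp only [thompson, thompsonδ, Finset.mem_union, Finset.mem_insert, Finset.mem_singleton,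
      Prod.mk.injEq] at he
    rcases he with he | ⟨_, -, -⟩ | ⟨-, rfl, rfl⟩
    · exact absurd rfl (thompsonδ_bounds he).2.2.1
    · omega
    · obtain ⟨rfl, -⟩ := thompson_pathFrom_final h
      simpa using ht.bind (x := x)
  · omega

end OfPathFrom

lemma Trace.of_pathFrom (γ : RGX Sig) (n : ℕ) (ls : List (VLabel Sig))
    (h : (thompson γ n).PathFrom n ls (n + 1)) : Trace γ ls := by
  induction γ generalizing n ls with
  | empty => obtain _ | ⟨h₀, -⟩ := h; simp [thompson, thompsonδ] at h₀
  | eps | letter _ =>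
    obtain _ | ⟨h₀, h⟩ := h
    simp only [thompson, thompsonδ, Finset.mem_singleton, Prod.mk.injEq] at h₀
    obtain ⟨-, rfl, rfl⟩ := h₀
    obtain ⟨rfl, -⟩ := thompson_pathFrom_final h
    constructor
  | union a b iha ihb => exact .of_pathFrom_union iha ihb h
  | concat a b iha ihb => exact .of_pathFrom_concat iha ihb h
  | star a iha => exact .of_pathFrom_star iha h
  | bind x a iha => exact .of_pathFrom_bind iha h

lemma acceptsWith_thompson_iff (γ : RGX Sig) (ls : List (VLabel Sig)) :
    AcceptsWith (thompson γ 0) ls ↔ Trace γ ls := by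
  refine ⟨fun ⟨qf, h, hf⟩ => ?_, fun h => ⟨1, h.pathFrom 0, by simp [thompson]⟩⟩
  obtain rfl : qf = 1 := by simpa [thompson] using hf
  exact .of_pathFrom γ 0 ls h

lemma card_thompsonδ_le (γ : RGX Sig) (n : ℕ) : (thompsonδ γ n).card ≤ 4 * γ.size := by
  induction γ generalizing n with
  | empty | eps | letter _ => simp [thompsonδ, RGX.size]
  | union a b iha ihb =>
    simp only [thompsonδ, RGX.size]
    grw [Finset.card_union_le, Finset.card_union_le, iha, ihb, Finset.card_le_four]
    omega
  | concat a b iha ihb =>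
    simp only [thompsonδ, RGX.size]
    grw [Finset.card_union_le, Finset.card_union_le, iha, ihb, Finset.card_le_three]
    omega
  | star a ih =>
    simp only [thompsonδ, RGX.size]
    grw [Finset.card_union_le, ih, Finset.card_le_three]
    omega
  | bind _ a ih =>
    simp only [thompsonδ, RGX.size]
    grw [Finset.card_union_le, ih, Finset.card_le_two]
    omega

lemma card_statesOf_thompson_le (γ : RGX Sig) : (statesOf (thompson γ 0)).card ≤ 2 * γ.size := by
  have := size_pos γ
  have hsub : statesOf (thompson γ 0) ⊆ Finset.range (2 * γ.size) := by
    intro s hs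
    simp only [statesOf, thompson, Finset.mem_insert, Finset.mem_union, Finset.mem_image,
      Finset.mem_singleton, Finset.mem_range] at hs ⊢
    rcases hs with rfl | (rfl | ⟨⟨p, l, q⟩, hm, rfl⟩) | ⟨⟨p, l, q⟩, hm, rfl⟩
    · omega
    · omega
    · have := thompsonδ_bounds hm; simp only at this ⊢; omega
    · have := thompsonδ_bounds hm; simp only at this ⊢; omega
  simpa using Finset.card_le_card hsub

lemma labelVars_subset_vars {γ : RGX Sig} {n p q : ℕ} {l : VLabel Sig}
    (h : (p, l, q) ∈ thompsonδ γ n) : labelVars l ⊆ γ.vars := by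
  induction γ generalizing n with
  | empty => simp [thompsonδ] at h
  | eps | letter _ =>
    simp only [thompsonδ, Finset.mem_singleton, Prod.mk.injEq] at h
    simp [h.2.1, labelVars]
  | union a b iha ihb | concat a b iha ihb =>
    simp only [thompsonδ, Finset.mem_union, Finset.mem_insert, Finset.mem_singleton,
      Prod.mk.injEq] at h
    rcases h with (h | h) | h
    · exact (iha h).trans Finset.subset_union_left
    · exact (ihb h).trans Finset.subset_union_right
    · obtain rfl : l = .eps := by aesop
      simp [labelVars]
  | star a ih =>
    simp only [thompsonδ, Finset.mem_union, Finset.mem_insert, Finset.mem_singleton,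
      Prod.mk.injEq] at h
    rcases h with h | ⟨-, rfl, -⟩ | ⟨-, rfl, -⟩ | ⟨-, rfl, -⟩
    · exact ih h
    all_goals simp [labelVars]
  | bind x a ih =>
    simp only [thompsonδ, Finset.mem_union, Finset.mem_insert, Finset.mem_singleton,
      Prod.mk.injEq] at h
    rcases h with h | ⟨-, rfl, -⟩ | ⟨-, rfl, -⟩
    · exact (ih h).trans (Finset.subset_insert x a.vars)
    all_goals simp [labelVars, RGX.vars]

/-- The only transitions operating on `x` are the two of the binder `x{·}`: synchronization keeps
`x` out of disjunctions, sequentiality out of stars and out of one side of each concatenation. -/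
lemma thompsonδ_target_eq {γ : RGX Sig} (hγ : γ.Sequential) {x : ℕ} (hx : γ.SyncFor x)
    {l : VLabel Sig} (hl : x ∈ labelVars l) {n p₁ q₁ p₂ q₂ : ℕ}
    (h₁ : (p₁, l, q₁) ∈ thompsonδ γ n) (h₂ : (p₂, l, q₂) ∈ thompsonδ γ n) : q₁ = q₂ := by
  have notMem {a : RGX Sig} {m p q : ℕ} (ha : x ∉ a.vars) : (p, l, q) ∉ thompsonδ a m :=
    fun h => ha (labelVars_subset_vars h hl)
  have hxγ := labelVars_subset_vars h₁ hl
  obtain rfl | rfl := mem_labelVars.1 hl <;>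
  induction γ generalizing n p₁ q₁ p₂ q₂ with
  | empty | eps | letter _ => simp [RGX.vars] at hxγ
  | union a b => simp [RGX.vars, hx.1.1, hx.1.2] at hxγ
  | star a => simp [RGX.vars, hγ.2] at hxγ
  | concat a b iha ihb =>
    simp only [thompsonδ, Finset.mem_union, Finset.mem_insert, Finset.mem_singleton,
      Prod.mk.injEq, reduceCtorEq, false_and, and_false, or_false] at h₁ h₂
    rcases Finset.mem_union.1 hxγ with hxa | hxb
    · have hxb := Finset.disjoint_left.1 hγ.2.2 hxa
      exact iha hγ.1 hx.1 hxa (h₁.resolve_right (notMem hxb)) (h₂.resolve_right (notMem hxb))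
    · have hxa := Finset.disjoint_right.1 hγ.2.2 hxb
      exact ihb hγ.2.1 hx.2 hxb (h₁.resolve_left (notMem hxa)) (h₂.resolve_left (notMem hxa))
  | bind y a ih =>
    simp only [thompsonδ, Finset.mem_union, Finset.mem_insert, Finset.mem_singleton,
      Prod.mk.injEq, reduceCtorEq, false_and, and_false, or_false, false_or, VLabel.openv.injEq,
      VLabel.closev.injEq] at h₁ h₂
    by_cases hxy : x = y
    · subst hxy
      obtain ⟨-, -, rfl⟩ := h₁.resolve_left (notMem hγ.2)
      obtain ⟨-, -, rfl⟩ := h₂.resolve_left (notMem hγ.2)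
      rfl
    · have hxa : x ∈ a.vars := by simpa [RGX.vars, hxy] using hxγ
      simp only [hxy, false_and, and_false, or_false] at h₁ h₂
      exact ih hγ.1 hx hxa h₁ h₂

lemma uniqueTarget_of_target_eq {A : VA Sig} {l : VLabel Sig}
    (h : ∀ p₁ q₁ p₂ q₂, (p₁, l, q₁) ∈ A.δ → (p₂, l, q₂) ∈ A.δ → q₁ = q₂) :
    UniqueTarget A l := by
  by_cases hex : ∃ p q, (p, l, q) ∈ A.δ
  · obtain ⟨p, q, hpq⟩ := hex
    exact ⟨q, fun p' q' h' => h _ _ _ _ h' hpq⟩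
  · exact ⟨0, fun p q h' => (hex ⟨p, q, h'⟩).elim⟩

lemma thompson_sequential {γ : RGX Sig} (hγ : γ.Sequential) : (thompson γ 0).Sequential :=
  fun ls h => (((acceptsWith_thompson_iff γ ls).1 h).wellNested hγ).validLabels

lemma syncForVA_thompson {γ : RGX Sig} (hγ : γ.Sequential) {x : ℕ} (hx : γ.SyncFor x) :
    SyncForVA (thompson γ 0) x := by
  refine ⟨uniqueTarget_of_target_eq fun _ _ _ _ => thompsonδ_target_eq hγ hx (by simp [labelVars]),
    uniqueTarget_of_target_eq fun _ _ _ _ => thompsonδ_target_eq hγ hx (by simp [labelVars]), ?_⟩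
  simp only [acceptsWith_thompson_iff]
  by_cases hxγ : x ∈ γ.vars
  · refine .inl fun ls h => ?_
    have ho := h.openv_mem_of_syncFor hγ hx hxγ
    exact ⟨ho, ((h.wellNested hγ).openv_mem_iff x).1 ho⟩
  · exact .inr fun ls h => varOps_eq_nil_iff.1 ((h.wellNested hγ).varOps_eq_nil hxγ)

lemma vaSem_thompson {γ : RGX Sig} (hγ : γ.Sequential) (d : List Sig) :
    vaSem (thompson γ 0) d = rgxSem γ d := by
  ext μ
  simp only [vaSem, rgxSem, Set.mem_ofPred_eq, acceptsWith_thompson_iff]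
  constructor
  · rintro ⟨ls, ht, rfl, -, rfl⟩
    simpa [runMapping_eq_traceMapping, length_readWord, add_comm] using ht.rmatch hγ [] []
  · intro hm
    obtain ⟨ls, ht, -, hd, rfl⟩ := hm.exists_trace hγ
    exact ⟨ls, ht, by simpa using hd.symm, (ht.wellNested hγ).validLabels, rfl⟩

theorem statement16 :
    ∃ c : ℕ, ∀ (γ : RGX Sig) (X : Finset ℕ), γ.Sequential → (∀ x ∈ X, γ.SyncFor x) →
      ∃ A : VA Sig, A.Sequential ∧ (∀ x ∈ X, SyncForVA A x) ∧
        (∀ d : List Sig, vaSem A d = rgxSem γ d) ∧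
        (statesOf A).card ≤ c * γ.size ∧ A.δ.card ≤ c * γ.size := by
  refine ⟨4, fun γ X hγ hX => ⟨thompson γ 0, thompson_sequential hγ,
    fun x hx => syncForVA_thompson hγ (hX x hx), vaSem_thompson hγ, ?_, card_thompsonδ_le γ 0⟩⟩
  have := card_statesOf_thompson_le γ
  omega

end Spanners
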